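/- arXiv:1501.07464 — 5 statements merged into one kernel-verified Lean document; each statement's English description precedes it below -/
import Mathlib

section
/- If a finite word u over alphabet {a,b} (a ≠ b) is of the form a·U·b where U is a palindrome, then u is abelian unbordered. -/
def AbelianEquiv {α : Type*} [DecidableEq α] (u v : List α) : Prop :=
  ∀ a : α, u.count a = v.count a

def AbelianBordered {α : Type*} [DecidableEq α] (w : List α) : Prop :=
  ∃ p s : List α, p <+: w ∧ s <:+ w ∧ p ≠ [] ∧ p.length < w.length ∧ AbelianEquiv p s

/-- If `u = a · U · b` with `a ≠ b`, `U` a palindrome over the alphabet `{a, b}`,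
then `u` is abelian unbordered. -/
theorem stmt_2 {α : Type*} [DecidableEq α] (a b : α) (hab : a ≠ b) (U : List α)
    (halph : ∀ c ∈ U, c = a ∨ c = b) (hpal : U.reverse = U) :
    ¬ AbelianBordered ([a] ++ U ++ [b]) := by
  rintro ⟨p, s, hp, hs, hne, hlen, heq⟩
  set w : List α := [a] ++ U ++ [b] with hw
  have hmult : (p : Multiset α) = (s : Multiset α) := by
    ext c
    simpa using heq c
  have hslen : s.length = p.length := by
    have := congrArg Multiset.card hmult
    simpa using this.symm
  have hwlen : w.length = U.length + 2 := by simp [hw]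
  obtain ⟨k, hpk⟩ : ∃ k, p.length = k + 1 := by
    cases p with
    | nil => exact absurd rfl hne
    | cons x xs => exact ⟨xs.length, rfl⟩
  rw [hwlen] at hlen
  rw [hpk] at hlen hslen
  have hkU : k ≤ U.length := by omega
  have hpeq : p = w.take (k + 1) := by
    have := List.prefix_iff_eq_take.mp hp
    rwa [hpk] at this
  have hseq : s = w.drop (w.length - (k + 1)) := by
    have := List.suffix_iff_eq_drop.mp hs
    rwa [hslen] at this
  have hcons : w = a :: (U ++ [b]) := by simp [hw]
  have hptake : p = a :: U.take k := by
    rw [hpeq, hcons, List.take_succ_cons, List.take_append_of_le_length hkU]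
  have hsdrop : s = U.drop (U.length - k) ++ [b] := by
    rw [hseq, hcons]
    have hl : (a :: (U ++ [b])).length - (k + 1) = (U.length - k) + 1 := by
      simp; omega
    rw [hl, List.drop_succ_cons, List.drop_append_of_le_length (by omega)]
  have hcnt := heq a
  rw [hptake, hsdrop] at hcnt
  have hdropcnt : (U.drop (U.length - k)).count a = (U.take k).count a := by
    calc (U.drop (U.length - k)).count a
        = (U.drop (U.length - k)).reverse.count a := by rw [List.count_reverse]
      _ = (U.reverse.take (U.length - (U.length - k))).count a := by
          rw [List.reverse_drop]
      _ = (U.take k).count a := by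
          rw [hpal]
          have h2 : U.length - (U.length - k) = k := by omega
          rw [h2]
  rw [List.count_cons_self, List.count_append, hdropcnt,
    List.count_singleton'] at hcnt
  simp [Ne.symm hab] at hcnt
end

section
/- If a finite binary word w = w₁⋯wₙ satisfies: for every k with 0 < k < n, the partial sum S(k) = Σ_{i≤k} f(wᵢ) (where f(1)=1, f(0)=-1) satisfies S(k)·n > S(n)·k, then w is weakly abelian unbordered, i.e., no non-empty proper prefix of w has the same frequency of the letter 1 as some non-empty proper suffix of w. -/
/-- Two non-empty finite words have the same letter frequencies. -/
def SameFreq {α : Type*} [DecidableEq α] (u v : List α) : Prop :=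
  ∀ a : α, (u.count a : ℚ) / u.length = (v.count a : ℚ) / v.length

/-- A finite word is weakly abelian bordered if it has a non-empty proper prefix
and a non-empty proper suffix with the same letter frequencies. -/
def WeaklyAbelianBordered {α : Type*} [DecidableEq α] (w : List α) : Prop :=
  ∃ p s : List α, p <+: w ∧ s <:+ w ∧ p ≠ [] ∧ p.length < w.length ∧
    s ≠ [] ∧ s.length < w.length ∧ SameFreq p s

/-- Partial sum `S(k)` for a binary word, with `1 ↦ +1` and `0 ↦ -1`. -/
def S (w : List Bool) (k : ℕ) : ℤ :=
  2 * ((w.take k).count true : ℤ) - k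

/-- If the partial-sum graph of a binary word lies strictly above the segment
joining `(0,0)` and `(n, S(n))`, then the word is weakly abelian unbordered. -/
theorem stmt_3 (w : List Bool)
    (h : ∀ k, 0 < k → k < w.length → S w k * w.length > S w w.length * k) :
    ¬ WeaklyAbelianBordered w := by
  rintro ⟨p, s, hp, hs, hpne, hpl, hsne, hsl, hfreq⟩
  have hk0 : 0 < p.length := List.length_pos_iff.mpr hpne
  have hm0 : 0 < s.length := List.length_pos_iff.mpr hsne
  set n := w.length with hn
  set k := p.length with hk
  set m := s.length with hm
  have hptake : p = w.take k := List.prefix_iff_eq_take.mp hp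
  have hsdrop : s = w.drop (n - m) := List.suffix_iff_eq_drop.mp hs
  set a := (w.take k).count true with ha
  set b := (w.take (n - m)).count true with hb
  set c := w.count true with hc
  have hbc : b + (w.drop (n - m)).count true = c := by
    rw [hb, hc]
    conv_rhs => rw [← List.take_append_drop (n - m) w]
    rw [List.count_append]
  have hpcount : p.count true = a := by rw [hptake]
  have hscount : s.count true = c - b := by rw [hsdrop]; omega
  have hble : b ≤ c := by omega
  have hfr := hfreq true
  rw [div_eq_div_iff (by positivity) (by positivity),
      hpcount, hscount] at hfr
  have hfrn : a * m = (c - b) * k := by exact_mod_cast hfr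
  have h1 := h k hk0 hpl
  have hj0 : 0 < n - m := by omega
  have hjn : n - m < n := by omega
  have h2 := h (n - m) hj0 hjn
  have hSk : S w k = 2 * (a : ℤ) - k := rfl
  have hSj : S w (n - m) = 2 * (b : ℤ) - ((n : ℤ) - m) := by
    rw [S, ← hb]; push_cast [Nat.cast_sub hsl.le]; ring
  have hSn : S w n = 2 * (c : ℤ) - n := by
    rw [S, hn, List.take_length, ← hc]
  have hcast : ((n - m : ℕ) : ℤ) = (n : ℤ) - m := by
    push_cast [Nat.cast_sub hsl.le]; ring
  rw [hSk, hSn] at h1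
  rw [hSj, hSn, hcast] at h2
  have hfrz : (a : ℤ) * m = ((c : ℤ) - b) * k := by
    have : ((a * m : ℕ) : ℤ) = (((c - b) * k : ℕ) : ℤ) := by exact_mod_cast hfrn
    push_cast [Nat.cast_sub hble] at this
    exact this
  have hmz : (0:ℤ) < m := by exact_mod_cast hm0
  have hkz : (0:ℤ) < k := by exact_mod_cast hk0
  nlinarith [mul_lt_mul_of_pos_right h1 hmz, mul_lt_mul_of_pos_right h2 hkz]
end

section
/- The binary word 1110000011000 is weakly abelian unbordered, yet its partial-sum graph does not lie strictly on one side of the line segment connecting its endpoints: there exist positions 0 < k < 13 with S(k)·13 > S(13)·k and positions 0 < k' < 13 with S(k')·13 < S(13)·k'. (This shows the converse of the convexity criterion for weak abelian unborderedness fails.) -/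
/-- The word `1110000011000`. -/
def w4 : List Bool :=
  [true, true, true, false, false, false, false, false, true, true, false, false, false]

lemma w4_check : ∀ k, k < 13 → ∀ l, l < 13 → 0 < k → 0 < l →
    (w4.take k).count true * l ≠ (w4.drop (13 - l)).count true * k := by decide

/-- `1110000011000` is weakly abelian unbordered, yet its partial-sum graph does not
lie strictly on one side of the segment joining its endpoints. -/
theorem stmt_4 :
    ¬ WeaklyAbelianBordered w4 ∧
    (∃ k, 0 < k ∧ k < 13 ∧ S w4 k * 13 > S w4 13 * k) ∧
    (∃ k', 0 < k' ∧ k' < 13 ∧ S w4 k' * 13 < S w4 13 * k') := by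
  refine ⟨?_, ⟨3, by norm_num, by norm_num, by decide⟩,
    ⟨8, by norm_num, by norm_num, by decide⟩⟩
  rintro ⟨p, s, hp, hs, hp0, hpl, hs0, hsl, hf⟩
  have hw : w4.length = 13 := rfl
  have hpk : p = w4.take p.length := List.prefix_iff_eq_take.mp hp
  have hsk : s = w4.drop (13 - s.length) := by
    rw [← hw]; exact List.suffix_iff_eq_drop.mp hs
  have hk0 : p.length ≠ 0 := fun h => hp0 (List.eq_nil_of_length_eq_zero h)
  have hl0 : s.length ≠ 0 := fun h => hs0 (List.eq_nil_of_length_eq_zero h)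
  have h1 := hf true
  have hkQ : (p.length : ℚ) ≠ 0 := Nat.cast_ne_zero.mpr hk0
  have hlQ : (s.length : ℚ) ≠ 0 := Nat.cast_ne_zero.mpr hl0
  have key : p.count true * s.length = s.count true * p.length := by
    have := (div_eq_div_iff hkQ hlQ).mp h1
    exact_mod_cast this
  refine w4_check p.length (hw ▸ hpl) s.length (hw ▸ hsl)
    (Nat.pos_of_ne_zero hk0) (Nat.pos_of_ne_zero hl0) ?_
  rw [← hpk, ← hsk]
  exact key
end

section
/- Let w be an infinite binary word with only finitely many weakly abelian unbordered factors (i.e., there is a constant C such that every factor of length at least C is weakly abelian bordered). Then w is balanced: there is a constant K such that for any two factors u, v of w with |u| = |v| and any letter a, ||u|_a − |v|_a| ≤ K. -/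
/-- The factor of the infinite word `w` starting at position `i` of length `n`. -/
def factor {α : Type*} (w : ℕ → α) (i n : ℕ) : List α :=
  (List.range n).map (fun k => w (i + k))

/-!
Fix a letter `a` and let `f k` be the number of `a`s among the first `k` letters of `w`; `f` is
1-Lipschitz, and a weakly abelian border of the factor between positions `p` and `q` is a
proper prefix interval and a proper suffix interval of `[p, q]` on which `f` has the same slope.
If the graph of `f` lay strictly below the chord over `[p, q]` at every interior point, every
prefix slope would be smaller and every suffix slope larger than the chord's; so every interval
of length at least `C` has an interior point `m` where the graph is on or above the chord.
Splitting at `m` and inducting on the length, the graph never drops more than `2C` below a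
chord; applied to `-f`, it never rises more than `2C` above one either. Comparing with the
single chord over `[0, N]` bounds the difference of the `a`-counts of two factors of equal
length by `8C`.
-/

/-- `(c - a)` times the height of the graph of `f` at `k` above the chord from `(a, f a)` to
`(c, f c)`. -/
def chordGap (f : ℕ → ℤ) (a k c : ℕ) : ℤ :=
  ((c : ℤ) - k) * (f k - f a) - ((k : ℤ) - a) * (f c - f k)

def EqualSlopeBorders (f : ℕ → ℤ) (C : ℕ) : Prop :=
  ∀ a c, a + C ≤ c → ∃ p s, a < p ∧ p < c ∧ a < s ∧ s < c ∧
    (f p - f a) * ((c : ℤ) - s) = (f c - f s) * ((p : ℤ) - a)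

section Chord

variable {f : ℕ → ℤ} {C : ℕ}

lemma chordGap_neg (a k c : ℕ) : chordGap (-f) a k c = -chordGap f a k c := by
  simp only [chordGap, Pi.neg_apply]
  ring

lemma chordGap_split_left (f : ℕ → ℤ) (a k m c : ℕ) :
    ((m : ℤ) - a) * chordGap f a k c =
      ((c : ℤ) - a) * chordGap f a k m + ((k : ℤ) - a) * chordGap f a m c := by
  simp only [chordGap]
  ring

lemma chordGap_split_right (f : ℕ → ℤ) (a k m c : ℕ) :
    ((c : ℤ) - m) * chordGap f a k c =
      ((c : ℤ) - a) * chordGap f m k c + ((c : ℤ) - k) * chordGap f a m c := by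
  simp only [chordGap]
  ring

lemma neg_two_mul_mul_le_chordGap (hlip : ∀ x y, x ≤ y → |f y - f x| ≤ (y : ℤ) - x)
    {a k c : ℕ} (hak : a ≤ k) (hkc : k ≤ c) :
    -(2 * ((k : ℤ) - a) * ((c : ℤ) - k)) ≤ chordGap f a k c := by
  have hl := (abs_le.mp (hlip a k hak)).1
  have hr := (abs_le.mp (hlip k c hkc)).2
  have hak' : (0 : ℤ) ≤ (k : ℤ) - a := by omega
  have hkc' : (0 : ℤ) ≤ (c : ℤ) - k := by omega
  simp only [chordGap]
  nlinarith [mul_le_mul_of_nonneg_left hl hkc', mul_le_mul_of_nonneg_left hr hak']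

namespace EqualSlopeBorders

lemma neg (hf : EqualSlopeBorders f C) : EqualSlopeBorders (-f) C := by
  intro a c hac
  obtain ⟨p, s, hap, hpc, has, hsc, hslope⟩ := hf a c hac
  refine ⟨p, s, hap, hpc, has, hsc, ?_⟩
  simp only [Pi.neg_apply]
  linear_combination -hslope

lemma exists_chordGap_nonneg (hf : EqualSlopeBorders f C) {a c : ℕ} (hac : a + C ≤ c) :
    ∃ m, a < m ∧ m < c ∧ 0 ≤ chordGap f a m c := by
  obtain ⟨p, s, hap, hpc, has, hsc, hslope⟩ := hf a c hac
  by_contra! hbelow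
  have hp := hbelow p hap hpc
  have hs := hbelow s has hsc
  have hp' : (0 : ℤ) < (p : ℤ) - a := by omega
  have hs' : (0 : ℤ) < (c : ℤ) - s := by omega
  simp only [chordGap] at hp hs
  nlinarith [mul_lt_mul_of_pos_right hp hs', mul_lt_mul_of_pos_right hs hp']

lemma neg_two_mul_le_chordGap (hf : EqualSlopeBorders f C)
    (hlip : ∀ x y, x ≤ y → |f y - f x| ≤ (y : ℤ) - x) {a k c : ℕ} (hak : a ≤ k) (hkc : k ≤ c) :
    -(2 * C * ((c : ℤ) - a)) ≤ chordGap f a k c := by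
  induction hn : c - a using Nat.strong_induction_on generalizing a k c with
  | _ n ih =>
    by_cases hsmall : c < a + C
    · have hprod : ((k : ℤ) - a) * ((c : ℤ) - k) ≤ C * ((c : ℤ) - a) :=
        mul_le_mul (by omega) (by omega) (by omega) (by omega) |>.trans_eq (mul_comm _ _)
      linarith [neg_two_mul_mul_le_chordGap hlip hak hkc]
    obtain ⟨m, ham, hmc, hm⟩ := hf.exists_chordGap_nonneg (not_lt.mp hsmall)
    rcases le_total k m with hkm | hmk
    · have hsub := ih (m - a) (by omega) hak hkm rfl
      have hmul : ((m : ℤ) - a) * -(2 * C * ((c : ℤ) - a)) ≤ ((m : ℤ) - a) * chordGap f a k c := by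
        rw [chordGap_split_left f a k m c]
        nlinarith [mul_le_mul_of_nonneg_left hsub (show (0 : ℤ) ≤ (c : ℤ) - a by omega),
          mul_nonneg (show (0 : ℤ) ≤ (k : ℤ) - a by omega) hm]
      exact le_of_mul_le_mul_left hmul (by omega)
    · have hsub := ih (c - m) (by omega) hmk hkc rfl
      have hmul : ((c : ℤ) - m) * -(2 * C * ((c : ℤ) - a)) ≤ ((c : ℤ) - m) * chordGap f a k c := by
        rw [chordGap_split_right f a k m c]
        nlinarith [mul_le_mul_of_nonneg_left hsub (show (0 : ℤ) ≤ (c : ℤ) - a by omega),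
          mul_nonneg (show (0 : ℤ) ≤ (c : ℤ) - k by omega) hm]
      exact le_of_mul_le_mul_left hmul (by omega)

lemma abs_chordGap_le (hf : EqualSlopeBorders f C)
    (hlip : ∀ x y, x ≤ y → |f y - f x| ≤ (y : ℤ) - x) {a k c : ℕ} (hak : a ≤ k) (hkc : k ≤ c) :
    |chordGap f a k c| ≤ 2 * C * ((c : ℤ) - a) := by
  have hlip_neg : ∀ x y, x ≤ y → |(-f) y - (-f) x| ≤ (y : ℤ) - x := fun x y hxy => by
    rw [Pi.neg_apply, Pi.neg_apply, neg_sub_neg, abs_sub_comm]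
    exact hlip x y hxy
  have hhigh := hf.neg.neg_two_mul_le_chordGap hlip_neg hak hkc
  rw [chordGap_neg] at hhigh
  exact abs_le.mpr ⟨hf.neg_two_mul_le_chordGap hlip hak hkc, by linarith⟩

/-- Both increments are compared with the chord of `f` over `[0, N]`, whose slope cancels. -/
lemma abs_sub_sub_le (hf : EqualSlopeBorders f C)
    (hlip : ∀ x y, x ≤ y → |f y - f x| ≤ (y : ℤ) - x) (i j n : ℕ) :
    |(f (i + n) - f i) - (f (j + n) - f j)| ≤ 8 * C := by
  set N := i + j + n + 1
  have hN : (0 : ℤ) < N := by positivity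
  have gap (k : ℕ) (hk : k ≤ N) : |chordGap f 0 k N| ≤ 2 * C * N := by
    simpa using hf.abs_chordGap_le hlip (Nat.zero_le k) hk
  have hsum : (N : ℤ) * ((f (i + n) - f i) - (f (j + n) - f j)) =
      chordGap f 0 (i + n) N - chordGap f 0 i N - chordGap f 0 (j + n) N + chordGap f 0 j N := by
    simp only [chordGap]
    push_cast
    ring
  have hbound : (N : ℤ) * |(f (i + n) - f i) - (f (j + n) - f j)| ≤ N * (8 * C) := by
    rw [← abs_of_pos hN, ← abs_mul, hsum, abs_of_pos hN]
    have g₁ := abs_le.mp (gap (i + n) (by omega))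
    have g₂ := abs_le.mp (gap i (by omega))
    have g₃ := abs_le.mp (gap (j + n) (by omega))
    have g₄ := abs_le.mp (gap j (by omega))
    exact abs_le.mpr ⟨by linarith, by linarith⟩
  exact le_of_mul_le_mul_left hbound hN

end EqualSlopeBorders

end Chord

section Factor

variable {α : Type*} (w : ℕ → α)

lemma length_factor (i n : ℕ) : (factor w i n).length = n := by
  simp [factor]

lemma factor_add (i m n : ℕ) : factor w i (m + n) = factor w i m ++ factor w (i + m) n := by
  simp only [factor, List.range_add, List.map_append, List.map_map, Function.comp_def, add_assoc]

variable {w}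

lemma eq_factor_of_prefix {p : List α} {i n : ℕ} (hp : p <+: factor w i n) :
    p = factor w i p.length := by
  have hlen : p.length ≤ n := length_factor w i n ▸ hp.length_le
  rw [List.prefix_iff_eq_take.mp hp, List.length_take, length_factor, min_eq_left hlen]
  simp only [factor, ← List.map_take, List.take_range, min_eq_left hlen]

lemma eq_factor_of_suffix {s : List α} {i n : ℕ} (hs : s <:+ factor w i n) :
    s = factor w (i + (n - s.length)) s.length := by
  have hlen : s.length ≤ n := length_factor w i n ▸ hs.length_le
  calc s = (factor w i n).drop (n - s.length) := by
        simpa only [length_factor] using List.suffix_iff_eq_drop.mp hs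
    _ = factor w (i + (n - s.length)) s.length := by
        have hsplit := factor_add w i (n - s.length) s.length
        rw [Nat.sub_add_cancel hlen] at hsplit
        rw [hsplit, List.drop_left' (length_factor w i _)]

end Factor

section PrefixCount

variable {α : Type*} [DecidableEq α] (w : ℕ → α) (a : α)

def prefixCount (k : ℕ) : ℤ := (factor w 0 k).count a

lemma count_factor (i n : ℕ) :
    ((factor w i n).count a : ℤ) = prefixCount w a (i + n) - prefixCount w a i := by
  rw [prefixCount, prefixCount, factor_add w 0 i n, zero_add, List.count_append]
  push_cast
  ring

lemma abs_prefixCount_sub_le {x y : ℕ} (hxy : x ≤ y) :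
    |prefixCount w a y - prefixCount w a x| ≤ (y : ℤ) - x := by
  obtain ⟨n, rfl⟩ := Nat.exists_eq_add_of_le hxy
  rw [← count_factor]
  have hle : (factor w x n).count a ≤ n := List.count_le_length.trans_eq (length_factor w x n)
  push_cast
  rw [abs_of_nonneg (by positivity)]
  linarith [(Nat.cast_le (α := ℤ)).mpr hle]

lemma equalSlopeBorders_prefixCount {C : ℕ}
    (h : ∀ i n, C ≤ n → WeaklyAbelianBordered (factor w i n)) :
    EqualSlopeBorders (prefixCount w a) C := by
  intro i c hic
  obtain ⟨p, s, hp, hs, hp0, hpn, hs0, hsn, hfreq⟩ := h i (c - i) (by omega)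
  rw [length_factor] at hpn hsn
  have hp0' := List.length_pos_iff.mpr hp0
  have hs0' := List.length_pos_iff.mpr hs0
  refine ⟨i + p.length, c - s.length, by omega, by omega, by omega, by omega, ?_⟩
  have hcross : (p.count a : ℚ) * s.length = s.count a * p.length :=
    (div_eq_div_iff (by positivity) (by positivity)).mp (hfreq a)
  have hpc : (p.count a : ℤ) = prefixCount w a (i + p.length) - prefixCount w a i := by
    rw [← count_factor, ← eq_factor_of_prefix hp]
  have hsc : (s.count a : ℤ) = prefixCount w a c - prefixCount w a (c - s.length) := by
    rw [eq_factor_of_suffix hs, count_factor, length_factor]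
    congr 2 <;> omega
  rw [← hpc, ← hsc]
  push_cast [show s.length ≤ c by omega]
  simp only [add_sub_cancel_left, sub_sub_cancel]
  exact_mod_cast hcross

end PrefixCount

/-- An infinite binary word all of whose sufficiently long factors are weakly abelian
bordered is balanced. -/
theorem stmt_5 (w : ℕ → Bool)
    (h : ∃ C : ℕ, ∀ i n, C ≤ n → WeaklyAbelianBordered (factor w i n)) :
    ∃ K : ℕ, ∀ (a : Bool) (i j n : ℕ),
      |((factor w i n).count a : ℤ) - ((factor w j n).count a : ℤ)| ≤ K := by
  obtain ⟨C, hC⟩ := h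
  refine ⟨8 * C, fun a i j n => ?_⟩
  rw [count_factor, count_factor]
  exact_mod_cast (equalSlopeBorders_prefixCount w a hC).abs_sub_sub_le
    (fun x y => abs_prefixCount_sub_le w a) i j n
end

section
/- Let w be an infinite binary word. If there exists C such that every factor of w of length at least C is weakly abelian bordered, then w is bounded weakly abelian periodic: there exist a prefix u, a rational r ∈ [0,1], and a bound B such that w = u v₁ v₂ v₃ ⋯ with each vᵢ non-empty of length at most B and ρ₁(vᵢ) = r for all i. -/
/-!
Cut `w` greedily, with window `N = 2C`: from the current position take the first length in
`[1, N + 1]` minimising the density of the factor starting there. Such a block has length `< C`: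
otherwise each of its proper prefixes is strictly denser than the block, so (mediant) each
proper suffix is strictly sparser, and the block could not be weakly abelian bordered.
Two consecutive blocks together still fit in the window, so the density of a block is at most
that of the concatenation with the next one, i.e. at most that of the next block. The block
densities therefore form a nondecreasing sequence with finitely many values (block lengths are
`< C`), which is eventually constant.
-/

theorem Monotone.exists_forall_ge_eq_of_finite_range {α : Type*} [LinearOrder α]
    {f : ℕ → α} (hf : Monotone f) (hfin : (Set.range f).Finite) :
    ∃ J, ∀ j ≥ J, f j = f J := by
  obtain ⟨_, ⟨J, rfl⟩, hJ⟩ := Set.exists_max_image _ id hfin (Set.range_nonempty f)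
  exact ⟨J, fun j hj => le_antisymm (hJ _ ⟨j, rfl⟩) (hf hj)⟩

section Mediant

variable {K : Type*} [Field K] [LinearOrder K] [IsStrictOrderedRing K] {a b p q : K}

lemma add_div_add_lt_div_iff (ha : 0 < a) (hb : 0 < b) :
    (p + q) / (a + b) < p / a ↔ q / b < (p + q) / (a + b) := by
  rw [div_lt_div_iff₀ (by positivity) ha, div_lt_div_iff₀ hb (by positivity)]
  constructor <;> intro h <;> nlinarith

lemma div_le_add_div_add_iff (ha : 0 < a) (hb : 0 < b) :
    p / a ≤ (p + q) / (a + b) ↔ p / a ≤ q / b := by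
  rw [div_le_div_iff₀ ha (by positivity), div_le_div_iff₀ ha hb]
  constructor <;> intro h <;> nlinarith

end Mediant

namespace WeaklyAbelian

/-- The frequency `ρ₁` of the letter `true`, with `density [] = 0`. -/
def density (v : List Bool) : ℚ := (v.count true : ℚ) / v.length

lemma density_nonneg (v : List Bool) : 0 ≤ density v := by
  unfold density; positivity

lemma density_le_one (v : List Bool) : density v ≤ 1 :=
  div_le_one_of_le₀ (by exact_mod_cast List.count_le_length) (by positivity)

section Append

variable {u v : List Bool}

lemma density_append_lt_left_iff (hu : u ≠ []) (hv : v ≠ []) :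
    density (u ++ v) < density u ↔ density v < density (u ++ v) := by
  simp only [density, List.count_append, List.length_append, Nat.cast_add]
  exact add_div_add_lt_div_iff (by simpa [List.length_pos_iff]) (by simpa [List.length_pos_iff])

lemma density_le_density_append_iff (hu : u ≠ []) (hv : v ≠ []) :
    density u ≤ density (u ++ v) ↔ density u ≤ density v := by
  simp only [density, List.count_append, List.length_append, Nat.cast_add]
  exact div_le_add_div_add_iff (by simpa [List.length_pos_iff]) (by simpa [List.length_pos_iff])

end Append

/-- By the mediant inequality, every proper suffix is then strictly sparser than the word. -/
lemma not_weaklyAbelianBordered_of_density_lt_take {v : List Bool}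
    (hv : ∀ k, 0 < k → k < v.length → density v < density (v.take k)) :
    ¬ WeaklyAbelianBordered v := by
  rintro ⟨p, s, hp, hs, hp0, hpv, hs0, hsv, hps⟩
  have hp_dense : density v < density p := by
    rw [List.prefix_iff_eq_take.1 hp]
    exact hv _ (List.length_pos_iff.2 hp0) hpv
  have hs_sparse : density s < density v := by
    have := List.length_pos_iff.2 hs0
    set t := v.length - s.length
    have ht : v.take t ≠ [] := by rw [← List.length_pos_iff, List.length_take]; omega
    have hs' : v.drop t ≠ [] := by rw [← List.length_pos_iff, List.length_drop]; omega
    have hvt := hv t (by omega) (by omega)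
    nth_rewrite 1 [← List.take_append_drop t v] at hvt
    rw [List.suffix_iff_eq_drop.1 hs]
    simpa only [List.take_append_drop] using (density_append_lt_left_iff ht hs').1 hvt
  have hps : density p = density s := hps true
  linarith

section Factor

variable (w : ℕ → Bool)

@[simp]
lemma length_factor (i n : ℕ) : (factor w i n).length = n := by
  simp [factor]

lemma density_factor (i n : ℕ) : density (factor w i n) = (factor w i n).count true / n := by
  rw [density, length_factor]

lemma factor_ne_nil {i n : ℕ} (hn : 0 < n) : factor w i n ≠ [] := by
  rwa [← List.length_pos_iff, length_factor]

lemma factor_add (i m n : ℕ) : factor w i (m + n) = factor w i m ++ factor w (i + m) n := by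
  simp [factor, List.range_add, Nat.add_assoc]

lemma take_factor {i k n : ℕ} (h : k ≤ n) : (factor w i n).take k = factor w i k := by
  simp [factor, ← List.map_take, List.take_range, h]

end Factor

section FirstArgmin

variable {β : Type*} [LinearOrder β] (f : ℕ → β) (N : ℕ)

lemma exists_mem_Icc_forall_le :
    ∃ m, m ∈ Finset.Icc 1 (N + 1) ∧ ∀ m' ∈ Finset.Icc 1 (N + 1), f m ≤ f m' :=
  Finset.exists_min_image _ f ⟨1, by simp⟩

/-- The least `m ∈ [1, N + 1]` at which `f` attains its minimum over `[1, N + 1]`. -/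
noncomputable def firstArgmin : ℕ := by
  classical exact Nat.find (exists_mem_Icc_forall_le f N)

lemma firstArgmin_mem : firstArgmin f N ∈ Finset.Icc 1 (N + 1) := by
  classical exact (Nat.find_spec (exists_mem_Icc_forall_le f N)).1

lemma firstArgmin_le {m : ℕ} (hm : m ∈ Finset.Icc 1 (N + 1)) : f (firstArgmin f N) ≤ f m := by
  classical exact (Nat.find_spec (exists_mem_Icc_forall_le f N)).2 m hm

lemma firstArgmin_lt {m : ℕ} (hm : 1 ≤ m) (hlt : m < firstArgmin f N) :
    f (firstArgmin f N) < f m := by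
  classical
  have hmem : m ∈ Finset.Icc 1 (N + 1) := by
    have := firstArgmin_mem f N
    simp only [Finset.mem_Icc] at this ⊢
    omega
  obtain ⟨m', hm', hm'm⟩ := not_forall₂.1 ((not_and.1 (Nat.find_min _ hlt)) hmem)
  exact (firstArgmin_le f N hm').trans_lt (not_le.1 hm'm)

end FirstArgmin

section Greedy

variable (w : ℕ → Bool) (N : ℕ)

noncomputable def greedyStep (u : ℕ) : ℕ := firstArgmin (fun m => density (factor w u m)) N

noncomputable def breakpoint : ℕ → ℕ
  | 0 => 0
  | j + 1 => breakpoint j + greedyStep w N (breakpoint j)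

noncomputable def block (j : ℕ) : List Bool :=
  factor w (breakpoint w N j) (greedyStep w N (breakpoint w N j))

lemma greedyStep_pos (u : ℕ) : 0 < greedyStep w N u :=
  (Finset.mem_Icc.1 (firstArgmin_mem _ N)).1

lemma breakpoint_succ_sub (j : ℕ) :
    breakpoint w N (j + 1) - breakpoint w N j = greedyStep w N (breakpoint w N j) := by
  simp [breakpoint]

lemma strictMono_breakpoint : StrictMono (breakpoint w N) :=
  strictMono_nat_of_lt_succ fun _ => Nat.lt_add_of_pos_right (greedyStep_pos w N _)

variable {w} {C : ℕ} (hC : ∀ i n, C ≤ n → WeaklyAbelianBordered (factor w i n))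
include hC

lemma greedyStep_lt (u : ℕ) : greedyStep w N u < C := by
  by_contra! hCd
  refine not_weaklyAbelianBordered_of_density_lt_take (fun k hk hkd => ?_) (hC u _ hCd)
  rw [length_factor] at hkd
  rw [take_factor w hkd.le]
  exact firstArgmin_lt (fun m => density (factor w u m)) N hk hkd

lemma density_block_le_succ (hN : 2 * C ≤ N + 1) (j : ℕ) :
    density (block w N j) ≤ density (block w N (j + 1)) := by
  set u := breakpoint w N j
  set d₁ := greedyStep w N u
  set d₂ := greedyStep w N (u + d₁)
  have hmin : density (factor w u d₁) ≤ density (factor w u (d₁ + d₂)) := by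
    refine firstArgmin_le (fun m => density (factor w u m)) N ?_
    have := greedyStep_lt N hC u
    have := greedyStep_lt N hC (u + d₁)
    have := greedyStep_pos w N u
    simp only [Finset.mem_Icc]
    omega
  rw [factor_add] at hmin
  exact (density_le_density_append_iff (factor_ne_nil w (greedyStep_pos w N u))
    (factor_ne_nil w (greedyStep_pos w N _))).1 hmin

lemma finite_range_density_block : (Set.range fun j => density (block w N j)).Finite := by
  refine ((List.finite_length_lt Bool C).image density).subset ?_
  rintro _ ⟨j, rfl⟩
  exact ⟨block w N j, by simpa [block] using greedyStep_lt N hC _, rfl⟩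

end Greedy

end WeaklyAbelian

open WeaklyAbelian in
/-- If every factor of length at least `C` of an infinite binary word `w` is weakly abelian
bordered, then `w` is bounded weakly abelian periodic: after a finite prefix, `w` factors
into non-empty blocks of uniformly bounded length all having frequency `r ∈ [0,1] ∩ ℚ`
of the letter `1`. The blocks are the factors between the breakpoints `k i`. -/
theorem stmt_7 (w : ℕ → Bool)
    (h : ∃ C : ℕ, ∀ i n, C ≤ n → WeaklyAbelianBordered (factor w i n)) :
    ∃ (r : ℚ) (B : ℕ) (k : ℕ → ℕ), 0 ≤ r ∧ r ≤ 1 ∧ StrictMono k ∧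
      (∀ i, k (i + 1) - k i ≤ B) ∧
      (∀ i, ((factor w (k i) (k (i + 1) - k i)).count true : ℚ)
              / (k (i + 1) - k i) = r) := by
  obtain ⟨C, hC⟩ := h
  set N := 2 * C
  obtain ⟨J, hJ⟩ := Monotone.exists_forall_ge_eq_of_finite_range
    (monotone_nat_of_le_succ (density_block_le_succ N hC (by omega)))
    (finite_range_density_block N hC)
  refine ⟨density (block w N J), C, fun i => breakpoint w N (J + i), density_nonneg _,
    density_le_one _, (strictMono_breakpoint w N).comp (strictMono_id.const_add J),
    fun i => ?_, fun i => ?_⟩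
  · dsimp only
    rw [← add_assoc, breakpoint_succ_sub]
    exact (greedyStep_lt N hC _).le
  · dsimp only
    rw [← add_assoc, ← Nat.cast_sub (strictMono_breakpoint w N (Nat.lt_succ_self _)).le,
      breakpoint_succ_sub, ← density_factor]
    exact hJ (J + i) (by omega)
end
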